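/- Let φ be a hybrid logic formula using operators from {◇,□,↓,@} and only the monotone Boolean connectives ∧, ∨, ⊥, ⊤. Then φ is satisfiable over the class of total frames if and only if K₁,g₁,w₁ ⊨ φ. -/

import Mathlib

/-- Hybrid logic formulas over countable sets of atomic propositions,
nominals and state variables (each indexed by `ℕ`). -/
inductive HForm : Type where
  | prop : ℕ → HForm
  | nom  : ℕ → HForm
  | svar : ℕ → HForm
  | top  : HForm
  | bot  : HForm
  | neg  : HForm → HForm
  | and  : HForm → HForm → HForm
  | or   : HForm → HForm → HForm
  | dia  : HForm → HForm
  | box  : HForm → HForm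
  | bind : ℕ → HForm → HForm
  | atN  : ℕ → HForm → HForm
  | atV  : ℕ → HForm → HForm
deriving DecidableEq

/-- A (hybrid) Kripke structure: states, transition relation, labeling of
propositions by sets of states and of nominals by (single) states. -/
structure Kripke (W : Type) where
  rel : W → W → Prop
  vProp : ℕ → Set W
  vNom : ℕ → W

/-- Update of an assignment: `updAsg g x w` is the `x`-variant of `g` mapping `x` to `w`. -/
def updAsg {W : Type} (g : ℕ → W) (x : ℕ) (w : W) : ℕ → W :=
  fun y => if y = x then w else g y

/-- The satisfaction relation `K, g, w ⊨ φ`. -/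
def Sat {W : Type} (K : Kripke W) : (ℕ → W) → W → HForm → Prop
  | _, w, .prop p => w ∈ K.vProp p
  | _, w, .nom i => w = K.vNom i
  | g, w, .svar x => w = g x
  | _, _, .top => True
  | _, _, .bot => False
  | g, w, .neg φ => ¬ Sat K g w φ
  | g, w, .and φ ψ => Sat K g w φ ∧ Sat K g w ψ
  | g, w, .or φ ψ => Sat K g w φ ∨ Sat K g w ψ
  | g, w, .dia φ => ∃ v, K.rel w v ∧ Sat K g v φ
  | g, w, .box φ => ∀ v, K.rel w v → Sat K g v φ
  | g, w, .bind x φ => Sat K (updAsg g x w) w φ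
  | g, _, .atN i φ => Sat K g (K.vNom i) φ
  | g, _, .atV x φ => Sat K g (g x) φ

/-- Satisfiability over the class of all frames. -/
def SatisfiableAll (φ : HForm) : Prop :=
  ∃ (W : Type) (K : Kripke W) (g : ℕ → W) (w : W), Sat K g w φ

/-- Satisfiability over the class of transitive frames. -/
def SatisfiableTrans (φ : HForm) : Prop :=
  ∃ (W : Type) (K : Kripke W), Transitive K.rel ∧ ∃ (g : ℕ → W) (w : W), Sat K g w φ

/-- Satisfiability over the class of total frames. -/
def SatisfiableTotal (φ : HForm) : Prop :=
  ∃ (W : Type) (K : Kripke W), (∀ w, ∃ v, K.rel w v) ∧ ∃ (g : ℕ → W) (w : W), Sat K g w φ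

/-- Satisfiability over the class of ER frames. -/
def SatisfiableER (φ : HForm) : Prop :=
  ∃ (W : Type) (K : Kripke W), Equivalence K.rel ∧ ∃ (g : ℕ → W) (w : W), Sat K g w φ

/-- The singleton reflexive Kripke structure `K₁` labeling every proposition and
nominal with its unique state. -/
def K1 : Kripke Unit := ⟨fun _ _ => True, fun _ => Set.univ, fun _ => ()⟩

/-- The assignment `g₁` mapping every state variable to the unique state of `K₁`. -/
def g1 : ℕ → Unit := fun _ => ()

/-- Unary operators of hybrid logic: `◇`, `□`, `↓x.`, `@_i` (nominal), `@_x` (state variable). -/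
inductive HOp : Type where
  | dia : HOp
  | box : HOp
  | bind : ℕ → HOp
  | atN : ℕ → HOp
  | atV : ℕ → HOp
deriving DecidableEq

def applyOp : HOp → HForm → HForm
  | .dia, φ => .dia φ
  | .box, φ => .box φ
  | .bind x, φ => .bind x φ
  | .atN i, φ => .atN i φ
  | .atV x, φ => .atV x φ

/-- Apply a sequence of operators to a formula (head of the list outermost). -/
def applyOps : List HOp → HForm → HForm
  | [], φ => φ
  | o :: os, φ => applyOp o (applyOps os φ)

/-- The formula uses only the monotone Boolean connectives `∧`, `∨`, `⊥`, `⊤`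
(i.e. no negation occurs). -/
def MonotoneForm : HForm → Prop
  | .prop _ => True
  | .nom _ => True
  | .svar _ => True
  | .top => True
  | .bot => True
  | .neg _ => False
  | .and φ ψ => MonotoneForm φ ∧ MonotoneForm ψ
  | .or φ ψ => MonotoneForm φ ∧ MonotoneForm ψ
  | .dia φ => MonotoneForm φ
  | .box φ => MonotoneForm φ
  | .bind _ φ => MonotoneForm φ
  | .atN _ φ => MonotoneForm φ
  | .atV _ φ => MonotoneForm φ

/-! Collapsing a total model onto its single-state quotient `K₁` preserves every negation-free
formula: atoms, nominals and state variables all hold at the unique state of `K₁`, `◇` is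
witnessed by its loop, and `□` quantifies over that loop alone, so it only needs the
single successor that totality provides. -/

theorem MonotoneForm.sat_K1_of_sat {W : Type} {K : Kripke W} (htot : ∀ w, ∃ v, K.rel w v)
    {φ : HForm} (hφ : MonotoneForm φ) {g : ℕ → W} {w : W} (hs : Sat K g w φ) :
    Sat K1 g1 () φ := by
  induction φ generalizing g w with
  | prop => exact Set.mem_univ ()
  | nom | svar | top => trivial
  | bot => exact hs.elim
  | neg => exact hφ.elim
  | and _ _ ih₁ ih₂ => exact ⟨ih₁ hφ.1 hs.1, ih₂ hφ.2 hs.2⟩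
  | or _ _ ih₁ ih₂ => exact hs.imp (ih₁ hφ.1) (ih₂ hφ.2)
  | dia _ ih =>
    obtain ⟨v, -, hv⟩ := hs
    exact ⟨(), trivial, ih hφ hv⟩
  | box _ ih =>
    obtain ⟨v, hwv⟩ := htot w
    exact fun _ _ => ih hφ (hs v hwv)
  | bind x _ ih =>
    change Sat K1 (updAsg g1 x ()) () _
    exact Subsingleton.elim g1 (updAsg g1 x ()) ▸ ih hφ hs
  | atN _ _ ih | atV _ _ ih => exact ih hφ hs

theorem K1_rel_total (w : Unit) : ∃ v, K1.rel w v := ⟨(), trivial⟩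

/-- A hybrid formula with operators from `{◇,□,↓,@}` and only the
monotone Boolean connectives `∧, ∨, ⊥, ⊤` is satisfiable over the class of total
frames iff it is satisfied at `w₁` in `K₁` under `g₁`. -/
theorem monotone_sat_total (φ : HForm) (h : MonotoneForm φ) :
    SatisfiableTotal φ ↔ Sat K1 g1 () φ := by
  constructor
  · rintro ⟨W, K, htot, g, w, hs⟩
    exact h.sat_K1_of_sat htot hs
  · exact fun hs => ⟨Unit, K1, K1_rel_total, g1, (), hs⟩
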